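/- Let R be an algebraic curvature tensor on ℝⁿ (n ≥ 4). The following are equivalent: (i) for all orthonormal four-frames {e₁,e₂,e₃,e₄} and all λ ∈ [0,1], R(e₁,e₃,e₁,e₃) + λ²R(e₁,e₄,e₁,e₄) + R(e₂,e₃,e₂,e₃) + λ²R(e₂,e₄,e₂,e₄) − 2λR(e₁,e₂,e₃,e₄) ≥ 0; (ii) R(ζ,η,ζ̄,η̄) ≥ 0 for all ζ, η ∈ ℂⁿ with g(ζ,ζ)g(η,η) − g(ζ,η)² = 0, where g is the complex bilinear extension of the inner product. -/

import Mathlib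

noncomputable section
open scoped BigOperators ComplexOrder

def dotp {n : ℕ} (X Y : Fin n → ℝ) : ℝ := ∑ i, X i * Y i

def ON4 {n : ℕ} (e₁ e₂ e₃ e₄ : Fin n → ℝ) : Prop :=
  dotp e₁ e₁ = 1 ∧ dotp e₂ e₂ = 1 ∧ dotp e₃ e₃ = 1 ∧ dotp e₄ e₄ = 1 ∧
  dotp e₁ e₂ = 0 ∧ dotp e₁ e₃ = 0 ∧ dotp e₁ e₄ = 0 ∧
  dotp e₂ e₃ = 0 ∧ dotp e₂ e₄ = 0 ∧ dotp e₃ e₄ = 0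

/-- Complex bilinear extension of the standard inner product. -/
def gc {n : ℕ} (ζ η : Fin n → ℂ) : ℂ := ∑ i, ζ i * η i

/-- Componentwise complex conjugation. -/
def conjv {n : ℕ} (ζ : Fin n → ℂ) : Fin n → ℂ := fun i => (starRingEnd ℂ) (ζ i)

/-- Inclusion of real vectors into the complexification. -/
def ιC {n : ℕ} (X : Fin n → ℝ) : Fin n → ℂ := fun i => (X i : ℂ)

/-!
Write `ζ = u + iv` and `η = w + ix`. The symmetries of `R` give
`R(ζ, η, ζ̄, η̄) = R(u,w,u,w) + R(u,x,u,x) + R(v,w,v,w) + R(v,x,v,x) - 2 R(u,v,w,x)`,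
which for `ζ = e₁ + i e₂`, `η = e₃ + iλ e₄` is the expression in (i); this gives (ii) ⇒ (i).
Conversely, `R(ζ, η, ζ̄, η̄)` is unchanged by `η ↦ η + μζ`, by `η ↦ cη` with `|c| = 1`, and by
exchanging `ζ` and `η`. These moves bring any pair with `g(ζ,ζ) g(η,η) = g(ζ,η)²` to one where
`u, v` are orthogonal of equal length, `w, x` are orthogonal to `u, v` and to each other, and
`|x| ≤ |w|`; after normalising, the expression above is a nonnegative multiple of the one in (i)
with `λ = |x| / |w|`.
-/

section Slots

variable {k M N : Type*} [CommSemiring k] [AddCommMonoid M] [Module k M] [AddCommMonoid N]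
  [Module k N] (f : MultilinearMap k (fun _ : Fin 4 => M) N) (a b c d : M)

lemma map_add_slot0 (a' : M) : f ![a + a', b, c, d] = f ![a, b, c, d] + f ![a', b, c, d] := by
  convert f.map_update_add ![a, b, c, d] 0 a a' using 3 <;> ext i <;> fin_cases i <;> rfl

lemma map_add_slot1 (b' : M) : f ![a, b + b', c, d] = f ![a, b, c, d] + f ![a, b', c, d] := by
  convert f.map_update_add ![a, b, c, d] 1 b b' using 3 <;> ext i <;> fin_cases i <;> rfl

lemma map_add_slot2 (c' : M) : f ![a, b, c + c', d] = f ![a, b, c, d] + f ![a, b, c', d] := by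
  convert f.map_update_add ![a, b, c, d] 2 c c' using 3 <;> ext i <;> fin_cases i <;> rfl

lemma map_add_slot3 (d' : M) : f ![a, b, c, d + d'] = f ![a, b, c, d] + f ![a, b, c, d'] := by
  convert f.map_update_add ![a, b, c, d] 3 d d' using 3 <;> ext i <;> fin_cases i <;> rfl

lemma map_smul_slot0 (s : k) : f ![s • a, b, c, d] = s • f ![a, b, c, d] := by
  convert f.map_update_smul ![a, b, c, d] 0 s a using 3 <;> ext i <;> fin_cases i <;> rfl

lemma map_smul_slot1 (s : k) : f ![a, s • b, c, d] = s • f ![a, b, c, d] := by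
  convert f.map_update_smul ![a, b, c, d] 1 s b using 3 <;> ext i <;> fin_cases i <;> rfl

lemma map_smul_slot2 (s : k) : f ![a, b, s • c, d] = s • f ![a, b, c, d] := by
  convert f.map_update_smul ![a, b, c, d] 2 s c using 3 <;> ext i <;> fin_cases i <;> rfl

lemma map_smul_slot3 (s : k) : f ![a, b, c, s • d] = s • f ![a, b, c, d] := by
  convert f.map_update_smul ![a, b, c, d] 3 s d using 3 <;> ext i <;> fin_cases i <;> rfl

end Slots

lemma dotProduct_self_nonneg {ι : Type*} [Fintype ι] (y : ι → ℝ) : 0 ≤ y ⬝ᵥ y :=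
  Finset.sum_nonneg fun i _ => mul_self_nonneg (y i)

lemma dotProduct_self_pos {ι : Type*} [Fintype ι] {y : ι → ℝ} (hy : y ≠ 0) : 0 < y ⬝ᵥ y :=
  (dotProduct_self_nonneg y).lt_of_ne (Ne.symm (dotProduct_self_eq_zero.not.2 hy))

lemma exists_ne_zero_forall_dotProduct_eq_zero {k n : ℕ} (hkn : k < n)
    (s : Fin k → Fin n → ℝ) : ∃ y : Fin n → ℝ, y ≠ 0 ∧ ∀ i, s i ⬝ᵥ y = 0 := by
  have hker : LinearMap.ker (Matrix.of s).mulVecLin ≠ ⊥ :=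
    LinearMap.ker_ne_bot_of_finrank_lt (by simpa using hkn)
  obtain ⟨y, hy, hy0⟩ := Submodule.exists_mem_ne_zero_of_ne_bot hker
  exact ⟨y, hy0, fun i => congrFun hy i⟩

lemma exists_unit_orthogonal_eq_smul {k n : ℕ} (hkn : k < n) (s : Fin k → Fin n → ℝ)
    (x : Fin n → ℝ) (hx : ∀ i, s i ⬝ᵥ x = 0) :
    ∃ e : Fin n → ℝ, e ⬝ᵥ e = 1 ∧ (∀ i, s i ⬝ᵥ e = 0) ∧ x = √(x ⬝ᵥ x) • e := by
  obtain ⟨y, hy0, hxy, hy⟩ : ∃ y : Fin n → ℝ, y ≠ 0 ∧ (x = 0 ∨ x = y) ∧ ∀ i, s i ⬝ᵥ y = 0 := by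
    by_cases hx0 : x = 0
    · obtain ⟨y, hy0, hy⟩ := exists_ne_zero_forall_dotProduct_eq_zero hkn s
      exact ⟨y, hy0, .inl hx0, hy⟩
    · exact ⟨x, hx0, .inr rfl, hx⟩
  have hr : 0 < √(y ⬝ᵥ y) := Real.sqrt_pos.2 (dotProduct_self_pos hy0)
  refine ⟨(√(y ⬝ᵥ y))⁻¹ • y, ?_, fun i => by simp [dotProduct_smul, hy i], ?_⟩
  · rw [smul_dotProduct, dotProduct_smul, smul_eq_mul, smul_eq_mul]
    field_simp
    exact (Real.sq_sqrt (dotProduct_self_pos hy0).le).symm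
  · rcases hxy with rfl | rfl
    · simp
    · rw [smul_smul, mul_inv_cancel₀ hr.ne', one_smul]

lemma Complex.exists_norm_eq_one_mul_sq_nonneg (z : ℂ) : ∃ c : ℂ, ‖c‖ = 1 ∧ 0 ≤ c ^ 2 * z := by
  refine ⟨_, Complex.norm_exp_ofReal_mul_I (-(z.arg / 2)), ?_⟩
  have h : Complex.exp (↑(-(z.arg / 2)) * Complex.I) ^ 2 * z = ‖z‖ := by
    nth_rewrite 2 [← Complex.norm_mul_exp_arg_mul_I z]
    rw [← Complex.exp_nat_mul, mul_left_comm, ← Complex.exp_add]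
    push_cast
    ring_nf
    simp
  rw [h]
  exact Complex.zero_le_real.2 (norm_nonneg z)

section Real

variable {n : ℕ} (R : MultilinearMap ℝ (fun _ : Fin 4 => (Fin n → ℝ)) ℝ)

lemma dotp_eq_dotProduct (X Y : Fin n → ℝ) : dotp X Y = X ⬝ᵥ Y := rfl

def IsPIC1 : Prop :=
  ∀ e₁ e₂ e₃ e₄ : Fin n → ℝ, ON4 e₁ e₂ e₃ e₄ →
    ∀ lam : ℝ, lam ∈ Set.Icc (0 : ℝ) 1 →
      0 ≤ R ![e₁, e₃, e₁, e₃] + lam ^ 2 * R ![e₁, e₄, e₁, e₄]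
        + R ![e₂, e₃, e₂, e₃] + lam ^ 2 * R ![e₂, e₄, e₂, e₄]
        - 2 * lam * R ![e₁, e₂, e₃, e₄]

/-- `isoCurv R u v w x` is `R(ζ, η, ζ̄, η̄)` for `ζ = u + iv`, `η = w + ix`
(see `IsComplexification.apply_conj`). -/
def isoCurv (u v w x : Fin n → ℝ) : ℝ :=
  R ![u, w, u, w] + R ![u, x, u, x] + R ![v, w, v, w] + R ![v, x, v, x] - 2 * R ![u, v, w, x]

lemma isoCurv_smul_left (t : ℝ) (u v w x : Fin n → ℝ) :
    isoCurv R (t • u) (t • v) w x = t ^ 2 * isoCurv R u v w x := by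
  simp only [isoCurv, map_smul_slot0, map_smul_slot1, map_smul_slot2, smul_eq_mul]
  ring

lemma isoCurv_smul_right (t : ℝ) (u v w x : Fin n → ℝ) :
    isoCurv R u v (t • w) (t • x) = t ^ 2 * isoCurv R u v w x := by
  simp only [isoCurv, map_smul_slot1, map_smul_slot2, map_smul_slot3, smul_eq_mul]
  ring

lemma isoCurv_zero_left (w x : Fin n → ℝ) : isoCurv R 0 0 w x = 0 := by
  simpa using isoCurv_smul_left R 0 0 0 w x

lemma isoCurv_zero_right (u v : Fin n → ℝ) : isoCurv R u v 0 0 = 0 := by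
  simpa using isoCurv_smul_right R 0 u v 0 0

/-- Writing `w = |w| e₃` and `x = |x| e₄`, this is `|w|²` times the PIC1 expression at
`λ = |x| / |w|`; the unit vector `e₄` exists even when `x = 0` because `n ≥ 4`. -/
lemma isoCurv_nonneg_of_orthonormal (hn : 4 ≤ n) (hP : IsPIC1 R) {e₁ e₂ w x : Fin n → ℝ}
    (h₁ : e₁ ⬝ᵥ e₁ = 1) (h₂ : e₂ ⬝ᵥ e₂ = 1) (h₁₂ : e₁ ⬝ᵥ e₂ = 0)
    (h₁w : e₁ ⬝ᵥ w = 0) (h₂w : e₂ ⬝ᵥ w = 0) (h₁x : e₁ ⬝ᵥ x = 0) (h₂x : e₂ ⬝ᵥ x = 0)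
    (hwx : w ⬝ᵥ x = 0) (hxw : x ⬝ᵥ x ≤ w ⬝ᵥ w) : 0 ≤ isoCurv R e₁ e₂ w x := by
  by_cases hw0 : w = 0
  · have hx0 : x = 0 := dotProduct_self_eq_zero.1
      (le_antisymm (by simpa [hw0] using hxw) (dotProduct_self_nonneg x))
    simp [hw0, hx0, isoCurv_zero_right]
  obtain ⟨e₃, h₃, h₃₁₂, hw⟩ := exists_unit_orthogonal_eq_smul (by omega) ![e₁, e₂] w
    (Fin.forall_fin_two.2 ⟨h₁w, h₂w⟩)
  have ha : 0 < √(w ⬝ᵥ w) := Real.sqrt_pos.2 (dotProduct_self_pos hw0)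
  have h₃x : e₃ ⬝ᵥ x = 0 := by
    rw [hw, smul_dotProduct, smul_eq_mul] at hwx
    exact (mul_eq_zero.1 hwx).resolve_left ha.ne'
  obtain ⟨e₄, h₄, h₄₁₂₃, hx⟩ := exists_unit_orthogonal_eq_smul (by omega) ![e₁, e₂, e₃] x
    (by simp [Fin.forall_fin_succ, h₁x, h₂x, h₃x])
  have hON : ON4 e₁ e₂ e₃ e₄ :=
    ⟨h₁, h₂, h₃, h₄, h₁₂, h₃₁₂ 0, h₄₁₂₃ 0, h₃₁₂ 1, h₄₁₂₃ 1, h₄₁₂₃ 2⟩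
  have hlam : √(x ⬝ᵥ x) / √(w ⬝ᵥ w) ∈ Set.Icc (0 : ℝ) 1 :=
    ⟨by positivity, div_le_one_of_le₀ (Real.sqrt_le_sqrt hxw) ha.le⟩
  have hscale : isoCurv R e₁ e₂ w x
      = √(w ⬝ᵥ w) ^ 2 * isoCurv R e₁ e₂ e₃ ((√(x ⬝ᵥ x) / √(w ⬝ᵥ w)) • e₄) := by
    rw [← isoCurv_smul_right, smul_smul, mul_div_cancel₀ _ ha.ne', ← hw, ← hx]
  rw [hscale]
  refine mul_nonneg (sq_nonneg _) ((hP e₁ e₂ e₃ e₄ hON _ hlam).trans_eq ?_)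
  simp only [isoCurv, map_smul_slot1, map_smul_slot3, smul_eq_mul]
  ring

lemma isoCurv_nonneg (hn : 4 ≤ n) (hP : IsPIC1 R) {u v w x : Fin n → ℝ}
    (huv : u ⬝ᵥ u = v ⬝ᵥ v) (hu_v : u ⬝ᵥ v = 0)
    (huw : u ⬝ᵥ w = 0) (hvw : v ⬝ᵥ w = 0) (hux : u ⬝ᵥ x = 0) (hvx : v ⬝ᵥ x = 0)
    (hwx : w ⬝ᵥ x = 0) (hxw : x ⬝ᵥ x ≤ w ⬝ᵥ w) : 0 ≤ isoCurv R u v w x := by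
  by_cases hu0 : u = 0
  · have hv0 : v = 0 := dotProduct_self_eq_zero.1 (by rw [← huv, hu0, zero_dotProduct])
    simp [hu0, hv0, isoCurv_zero_left]
  have hr : 0 < √(u ⬝ᵥ u) := Real.sqrt_pos.2 (dotProduct_self_pos hu0)
  have hr2 : √(u ⬝ᵥ u) ^ 2 = u ⬝ᵥ u := Real.sq_sqrt (dotProduct_self_pos hu0).le
  have h := isoCurv_nonneg_of_orthonormal R hn hP (e₁ := (√(u ⬝ᵥ u))⁻¹ • u)
    (e₂ := (√(u ⬝ᵥ u))⁻¹ • v)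
    (by simp only [smul_dotProduct, dotProduct_smul, smul_eq_mul]; field_simp; exact hr2.symm)
    (by simp only [smul_dotProduct, dotProduct_smul, smul_eq_mul]; field_simp; rw [hr2, huv])
    (by simp [dotProduct_smul, hu_v]) (by simp [huw]) (by simp [hvw]) (by simp [hux])
    (by simp [hvx]) hwx hxw
  rw [isoCurv_smul_left] at h
  exact (mul_nonneg_iff_of_pos_left (by positivity)).1 h

end Real

section Complexification

variable {n : ℕ}

structure IsAlgCurvatureTensor (R : MultilinearMap ℝ (fun _ : Fin 4 => (Fin n → ℝ)) ℝ) :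
    Prop where
  anti : ∀ X Y Z W, R ![X, Y, Z, W] = - R ![Y, X, Z, W]
  pair : ∀ X Y Z W, R ![X, Y, Z, W] = R ![Z, W, X, Y]
  bianchi : ∀ X Y Z W, R ![X, Y, Z, W] + R ![Y, Z, X, W] + R ![Z, X, Y, W] = 0

def IsComplexification (Rc : MultilinearMap ℂ (fun _ : Fin 4 => (Fin n → ℂ)) ℂ)
    (R : MultilinearMap ℝ (fun _ : Fin 4 => (Fin n → ℝ)) ℝ) : Prop :=
  ∀ X Y Z W : Fin n → ℝ, Rc ![ιC X, ιC Y, ιC Z, ιC W] = (R ![X, Y, Z, W] : ℂ)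

lemma ιC_single (j : Fin n) : ιC (Pi.single j 1) = Pi.single j 1 := by
  ext i
  by_cases h : i = j <;> simp [ιC, h]

lemma multilinearMap_ext_ιC {S T : MultilinearMap ℂ (fun _ : Fin 4 => (Fin n → ℂ)) ℂ}
    (h : ∀ A B C D, S ![ιC A, ιC B, ιC C, ιC D] = T ![ιC A, ιC B, ιC C, ιC D]) : S = T :=
  Module.Basis.ext_multilinear (fun _ => Pi.basisFun ℂ (Fin n)) fun v => by
    have hv : (fun i => Pi.basisFun ℂ (Fin n) (v i)) = ![ιC (Pi.single (v 0) 1),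
        ιC (Pi.single (v 1) 1), ιC (Pi.single (v 2) 1), ιC (Pi.single (v 3) 1)] := by
      funext i
      fin_cases i <;> simp [ιC_single]
    rw [hv, h]

def reV (ζ : Fin n → ℂ) : Fin n → ℝ := fun i => (ζ i).re

def imV (ζ : Fin n → ℂ) : Fin n → ℝ := fun i => (ζ i).im

lemma ιC_reV_add_I_smul_ιC_imV (ζ : Fin n → ℂ) : ιC (reV ζ) + Complex.I • ιC (imV ζ) = ζ := by
  funext i
  apply Complex.ext <;> simp [ιC, reV, imV]

lemma ιC_reV_add_neg_I_smul_ιC_imV (ζ : Fin n → ℂ) :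
    ιC (reV ζ) + (-Complex.I) • ιC (imV ζ) = conjv ζ := by
  funext i
  apply Complex.ext <;> simp [ιC, reV, imV, conjv]

lemma reV_ιC_add_I_smul (u v : Fin n → ℝ) : reV (ιC u + Complex.I • ιC v) = u := by
  ext i
  simp [ιC, reV]

lemma imV_ιC_add_I_smul (u v : Fin n → ℝ) : imV (ιC u + Complex.I • ιC v) = v := by
  ext i
  simp [ιC, imV]

lemma conjv_eq_star (ζ : Fin n → ℂ) : conjv ζ = star ζ := rfl

lemma conjv_add (ζ η : Fin n → ℂ) : conjv (ζ + η) = conjv ζ + conjv η :=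
  star_add ζ η

lemma conjv_smul (c : ℂ) (ζ : Fin n → ℂ) : conjv (c • ζ) = star c • conjv ζ :=
  star_smul c ζ

lemma gc_eq_dotProduct (ζ η : Fin n → ℂ) : gc ζ η = ζ ⬝ᵥ η := rfl

lemma gc_comm (ζ η : Fin n → ℂ) : gc ζ η = gc η ζ :=
  dotProduct_comm ζ η

lemma gc_smul_right (ζ η : Fin n → ℂ) (c : ℂ) : gc ζ (c • η) = c * gc ζ η :=
  dotProduct_smul c ζ η

lemma gc_smul_smul (η : Fin n → ℂ) (c : ℂ) : gc (c • η) (c • η) = c ^ 2 * gc η η := by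
  simp only [gc_eq_dotProduct, smul_dotProduct, dotProduct_smul, smul_eq_mul]
  ring

lemma gc_add_smul_right (a ζ η : Fin n → ℂ) (μ : ℂ) :
    gc a (η + μ • ζ) = gc a η + μ * gc a ζ := by
  simp only [gc_eq_dotProduct, dotProduct_add, dotProduct_smul, smul_eq_mul]

lemma gc_add_smul_self (ζ η : Fin n → ℂ) (μ : ℂ) :
    gc (η + μ • ζ) (η + μ • ζ) = gc η η + 2 * μ * gc ζ η + μ ^ 2 * gc ζ ζ := by
  simp only [gc_eq_dotProduct, dotProduct_add, add_dotProduct, dotProduct_smul, smul_dotProduct,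
    smul_eq_mul, dotProduct_comm η ζ]
  ring

lemma gc_re (ζ η : Fin n → ℂ) :
    (gc ζ η).re = reV ζ ⬝ᵥ reV η - imV ζ ⬝ᵥ imV η := by
  simp [gc, dotProduct, reV, imV, Complex.re_sum, Finset.sum_sub_distrib]

lemma gc_im (ζ η : Fin n → ℂ) :
    (gc ζ η).im = reV ζ ⬝ᵥ imV η + imV ζ ⬝ᵥ reV η := by
  simp [gc, dotProduct, reV, imV, Complex.im_sum, Finset.sum_add_distrib]

lemma reV_conjv (ζ : Fin n → ℂ) : reV (conjv ζ) = reV ζ := by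
  ext i
  simp [reV, conjv]

lemma imV_conjv (ζ : Fin n → ℂ) : imV (conjv ζ) = -imV ζ := by
  ext i
  simp [imV, conjv]

lemma map_smul_conjv (f : MultilinearMap ℂ (fun _ : Fin 4 => (Fin n → ℂ)) ℂ)
    (ζ η : Fin n → ℂ) (c : ℂ) :
    f ![ζ, c • η, conjv ζ, conjv (c • η)] = ‖c‖ ^ 2 * f ![ζ, η, conjv ζ, conjv η] := by
  rw [conjv_smul, map_smul_slot1, map_smul_slot3, smul_smul, smul_eq_mul,
    Complex.star_def, Complex.mul_conj']

namespace IsComplexification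

variable {R : MultilinearMap ℝ (fun _ : Fin 4 => (Fin n → ℝ)) ℝ}
  {Rc : MultilinearMap ℂ (fun _ : Fin 4 => (Fin n → ℂ)) ℂ}

lemma antisymm_left (hc : IsComplexification Rc R) (hR : IsAlgCurvatureTensor R)
    (a b c d : Fin n → ℂ) : Rc ![a, b, c, d] = - Rc ![b, a, c, d] := by
  have hσ : ∀ a b c d : Fin n → ℂ, (fun i => ![a, b, c, d] (Equiv.swap 0 1 i)) = ![b, a, c, d] :=
    fun _ _ _ _ => by funext i; fin_cases i <;> rfl
  have h : Rc.domDomCongr (Equiv.swap 0 1) = -Rc := multilinearMap_ext_ιC fun A B C D => by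
    rw [MultilinearMap.domDomCongr_apply, hσ, neg_apply, hc, hc, hR.anti]
    push_cast; rfl
  simpa [hσ] using congrArg (fun S => S ![b, a, c, d]) h

lemma antisymm_right (hc : IsComplexification Rc R) (hR : IsAlgCurvatureTensor R)
    (a b c d : Fin n → ℂ) : Rc ![a, b, c, d] = - Rc ![a, b, d, c] := by
  have hσ : ∀ a b c d : Fin n → ℂ, (fun i => ![a, b, c, d] (Equiv.swap 2 3 i)) = ![a, b, d, c] :=
    fun _ _ _ _ => by funext i; fin_cases i <;> rfl
  have h : Rc.domDomCongr (Equiv.swap 2 3) = -Rc := multilinearMap_ext_ιC fun A B C D => by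
    rw [MultilinearMap.domDomCongr_apply, hσ, neg_apply, hc, hc, hR.pair,
      hR.anti, hR.pair]
    push_cast; rfl
  simpa [hσ] using congrArg (fun S => S ![a, b, d, c]) h

lemma apply_cplx (hc : IsComplexification Rc R) (hR : IsAlgCurvatureTensor R)
    (u v w x : Fin n → ℝ) :
    Rc ![ιC u + Complex.I • ιC v, ιC w + Complex.I • ιC x,
      ιC u + (-Complex.I) • ιC v, ιC w + (-Complex.I) • ιC x] = isoCurv R u v w x := by
  simp only [map_add_slot0, map_add_slot1, map_add_slot2, map_add_slot3, map_smul_slot0,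
    map_smul_slot1, map_smul_slot2, map_smul_slot3, hc _ _ _ _, smul_eq_mul, isoCurv]
  ring_nf
  simp only [Complex.I_sq, Complex.I_pow_four,
    show Complex.I ^ 3 = -Complex.I by rw [pow_succ, Complex.I_sq]; ring]
  have hb := congrArg Complex.ofReal (hR.bianchi u v w x)
  have ha := congrArg Complex.ofReal (hR.anti w u v x)
  push_cast at hb ha ⊢
  -- the imaginary part cancels by pair symmetry, and the first Bianchi identity turns the
  -- real cross terms into `-2 R(u, v, w, x)`
  linear_combination Complex.I * (congrArg Complex.ofReal (hR.pair v w u w)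
    + congrArg Complex.ofReal (hR.pair u x u w) + congrArg Complex.ofReal (hR.pair v x v w)
    + congrArg Complex.ofReal (hR.pair v x u x)) - congrArg Complex.ofReal (hR.pair v x u w)
    - congrArg Complex.ofReal (hR.pair v w u x) + 2 * hb - 2 * ha

lemma map_self_left (hc : IsComplexification Rc R) (hR : IsAlgCurvatureTensor R)
    (a c d : Fin n → ℂ) : Rc ![a, a, c, d] = 0 := by
  linear_combination hc.antisymm_left hR a a c d / 2

lemma map_self_right (hc : IsComplexification Rc R) (hR : IsAlgCurvatureTensor R)
    (a b c : Fin n → ℂ) : Rc ![a, b, c, c] = 0 := by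
  linear_combination hc.antisymm_right hR a b c c / 2

lemma apply_conj (hc : IsComplexification Rc R) (hR : IsAlgCurvatureTensor R)
    (ζ η : Fin n → ℂ) :
    Rc ![ζ, η, conjv ζ, conjv η] = isoCurv R (reV ζ) (imV ζ) (reV η) (imV η) := by
  have h := hc.apply_cplx hR (reV ζ) (imV ζ) (reV η) (imV η)
  rwa [ιC_reV_add_I_smul_ιC_imV, ιC_reV_add_I_smul_ιC_imV, ιC_reV_add_neg_I_smul_ιC_imV,
    ιC_reV_add_neg_I_smul_ιC_imV] at h

lemma apply_conj_add_smul (hc : IsComplexification Rc R) (hR : IsAlgCurvatureTensor R)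
    (ζ η : Fin n → ℂ) (μ : ℂ) :
    Rc ![ζ, η + μ • ζ, conjv ζ, conjv (η + μ • ζ)] = Rc ![ζ, η, conjv ζ, conjv η] := by
  rw [conjv_add, conjv_smul, map_add_slot1, map_add_slot3, map_add_slot3, map_smul_slot1,
    map_smul_slot3, map_smul_slot3, hc.map_self_left hR, hc.map_self_right hR,
    hc.map_self_right hR]
  simp

lemma apply_conj_swap (hc : IsComplexification Rc R) (hR : IsAlgCurvatureTensor R)
    (ζ η : Fin n → ℂ) : Rc ![η, ζ, conjv η, conjv ζ] = Rc ![ζ, η, conjv ζ, conjv η] := by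
  rw [hc.antisymm_left hR, hc.antisymm_right hR, neg_neg]

lemma nonneg_of_orthogonal_conj (hn : 4 ≤ n) (hP : IsPIC1 R) (hc : IsComplexification Rc R)
    (hR : IsAlgCurvatureTensor R) {ζ η : Fin n → ℂ} (hζζ : gc ζ ζ = 0) (hζη : gc ζ η = 0)
    (hζ'η : gc (conjv ζ) η = 0) (hηη : 0 ≤ gc η η) : 0 ≤ Rc ![ζ, η, conjv ζ, conjv η] := by
  rw [hc.apply_conj hR, Complex.zero_le_real]
  rw [Complex.nonneg_iff, gc_re, gc_im] at hηη
  have h₁ := congrArg Complex.re hζζ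
  have h₂ := congrArg Complex.im hζζ
  have h₃ := congrArg Complex.re hζη
  have h₄ := congrArg Complex.im hζη
  have h₅ := congrArg Complex.re hζ'η
  have h₆ := congrArg Complex.im hζ'η
  simp only [gc_re, gc_im, reV_conjv, imV_conjv, neg_dotProduct, Complex.zero_re,
    Complex.zero_im] at h₁ h₂ h₃ h₄ h₅ h₆
  have hvu := dotProduct_comm (imV ζ) (reV ζ)
  have hxw := dotProduct_comm (imV η) (reV η)
  apply isoCurv_nonneg R hn hP <;> linarith

/-- Shifting `η` along `ζ` makes it orthogonal to `ζ̄` as well, and a unimodular factor makes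
`g(η, η) ≥ 0`, i.e. `Re η ⊥ Im η` and `|Im η| ≤ |Re η|`; none of this changes `R(ζ, η, ζ̄, η̄)`. -/
lemma nonneg_of_isotropic_orthogonal (hn : 4 ≤ n) (hP : IsPIC1 R)
    (hc : IsComplexification Rc R) (hR : IsAlgCurvatureTensor R) {ζ η : Fin n → ℂ}
    (hζζ : gc ζ ζ = 0) (hζη : gc ζ η = 0) : 0 ≤ Rc ![ζ, η, conjv ζ, conjv η] := by
  obtain ⟨μ, hμ⟩ : ∃ μ : ℂ, gc (conjv ζ) η + μ * gc (conjv ζ) ζ = 0 := by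
    rcases eq_or_ne ζ 0 with rfl | hζ0
    · exact ⟨0, by simp [gc_eq_dotProduct, conjv_eq_star]⟩
    · have : gc (conjv ζ) ζ ≠ 0 := dotProduct_star_self_eq_zero.not.2 hζ0
      exact ⟨-(gc (conjv ζ) η / gc (conjv ζ) ζ), by field_simp; ring⟩
  have hζ'η : gc (conjv ζ) (η + μ • ζ) = 0 := by rw [gc_add_smul_right, hμ]
  obtain ⟨c, hc1, hcη⟩ := Complex.exists_norm_eq_one_mul_sq_nonneg (gc (η + μ • ζ) (η + μ • ζ))
  have h := hc.nonneg_of_orthogonal_conj hn hP hR (η := c • (η + μ • ζ)) hζζ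
    (by rw [gc_smul_right, gc_add_smul_right, hζζ, hζη]; ring)
    (by rw [gc_smul_right, hζ'η, mul_zero])
    (by rwa [gc_smul_smul])
  rwa [map_smul_conjv, hc1, hc.apply_conj_add_smul hR, Complex.ofReal_one, one_pow,
    one_mul] at h

/-- If `g(ζ, ζ) ≠ 0`, then `η - (g(ζ, η) / g(ζ, ζ)) ζ` is isotropic and orthogonal to `ζ`, so the
previous case applies with the roles of `ζ` and `η` exchanged. -/
lemma nonneg_of_degenerate (hn : 4 ≤ n) (hP : IsPIC1 R) (hc : IsComplexification Rc R)
    (hR : IsAlgCurvatureTensor R) {ζ η : Fin n → ℂ}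
    (hdeg : gc ζ ζ * gc η η - gc ζ η ^ 2 = 0) : 0 ≤ Rc ![ζ, η, conjv ζ, conjv η] := by
  by_cases hζζ : gc ζ ζ = 0
  · refine hc.nonneg_of_isotropic_orthogonal hn hP hR hζζ ((pow_eq_zero_iff two_ne_zero).1 ?_)
    rw [hζζ] at hdeg
    linear_combination -hdeg
  obtain ⟨μ, hμ⟩ : ∃ μ : ℂ, gc ζ η + μ * gc ζ ζ = 0 :=
    ⟨-(gc ζ η / gc ζ ζ), by field_simp; ring⟩
  rw [← hc.apply_conj_add_smul hR ζ η μ, ← hc.apply_conj_swap hR]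
  refine hc.nonneg_of_isotropic_orthogonal hn hP hR ?_ (by rw [gc_comm, gc_add_smul_right, hμ])
  refine (mul_eq_zero.1 ?_).resolve_left hζζ
  rw [gc_add_smul_self]
  linear_combination hdeg + (gc ζ η + μ * gc ζ ζ) * hμ

lemma isPIC1 (hc : IsComplexification Rc R) (hR : IsAlgCurvatureTensor R)
    (h : ∀ ζ η : Fin n → ℂ, gc ζ ζ * gc η η - gc ζ η ^ 2 = 0 →
      0 ≤ Rc ![ζ, η, conjv ζ, conjv η]) : IsPIC1 R := by
  intro e₁ e₂ e₃ e₄ hON lam _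
  simp only [ON4, dotp_eq_dotProduct] at hON
  obtain ⟨h₁, h₂, -, -, h₁₂, h₁₃, h₁₄, h₂₃, h₂₄, -⟩ := hON
  set ζ := ιC e₁ + Complex.I • ιC e₂
  set η := ιC e₃ + Complex.I • ιC (lam • e₄)
  have hζζ : gc ζ ζ = 0 := by
    apply Complex.ext <;>
      simp [ζ, gc_re, gc_im, reV_ιC_add_I_smul, imV_ιC_add_I_smul, h₁, h₂, h₁₂,
        dotProduct_comm e₂ e₁]
  have hζη : gc ζ η = 0 := by
    apply Complex.ext <;>
      simp [ζ, η, gc_re, gc_im, reV_ιC_add_I_smul, imV_ιC_add_I_smul, dotProduct_smul, h₁₃,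
        h₁₄, h₂₃, h₂₄]
  have key := h ζ η (by rw [hζζ, hζη]; ring)
  rw [hc.apply_conj hR, reV_ιC_add_I_smul, imV_ιC_add_I_smul, reV_ιC_add_I_smul,
    imV_ιC_add_I_smul, Complex.zero_le_real] at key
  refine key.trans_eq ?_
  simp only [isoCurv, map_smul_slot1, map_smul_slot3, smul_eq_mul]
  ring

end IsComplexification

end Complexification

theorem pic1_iff_halfisotropic {n : ℕ} (hn : 4 ≤ n)
    (R : MultilinearMap ℝ (fun _ : Fin 4 => (Fin n → ℝ)) ℝ)
    (hanti : ∀ X Y Z W, R ![X, Y, Z, W] = - R ![Y, X, Z, W])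
    (hpair : ∀ X Y Z W, R ![X, Y, Z, W] = R ![Z, W, X, Y])
    (hbianchi : ∀ X Y Z W,
      R ![X, Y, Z, W] + R ![Y, Z, X, W] + R ![Z, X, Y, W] = 0)
    (Rc : MultilinearMap ℂ (fun _ : Fin 4 => (Fin n → ℂ)) ℂ)
    (hext : ∀ X Y Z W : Fin n → ℝ,
      Rc ![ιC X, ιC Y, ιC Z, ιC W] = (R ![X, Y, Z, W] : ℂ)) :
    (∀ e₁ e₂ e₃ e₄ : Fin n → ℝ, ON4 e₁ e₂ e₃ e₄ →
      ∀ lam : ℝ, lam ∈ Set.Icc (0 : ℝ) 1 →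
      0 ≤ R ![e₁, e₃, e₁, e₃] + lam ^ 2 * R ![e₁, e₄, e₁, e₄]
          + R ![e₂, e₃, e₂, e₃] + lam ^ 2 * R ![e₂, e₄, e₂, e₄]
          - 2 * lam * R ![e₁, e₂, e₃, e₄]) ↔
    (∀ ζ η : Fin n → ℂ, gc ζ ζ * gc η η - (gc ζ η) ^ 2 = 0 →
      0 ≤ Rc ![ζ, η, conjv ζ, conjv η]) := by
  have hR : IsAlgCurvatureTensor R := ⟨hanti, hpair, hbianchi⟩
  exact ⟨fun hP _ _ hdeg => IsComplexification.nonneg_of_degenerate hn hP hext hR hdeg,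
    IsComplexification.isPIC1 hext hR⟩
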